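/- For i ∈ T_n, let I_i = {η ∈ A^n : Π(η) = Π(i)}. Then I_i = {η ∈ A^n : Φ(η) = i}, where Φ is the map replacing maximal bad blocks (0,3,...,3) by good blocks (1,...,1,0). -/
import Mathlib


/-- The alphabet `A = {0, 1, 3}`. -/
def A : Set ℕ := {0, 1, 3}

/-- The natural projection `Π(i) = Σ_{k=1}^n i_k 3^{-(k-1)}`. -/
noncomputable def proj : List ℕ → ℝ
  | [] => 0
  | a :: t => (a : ℝ) + proj t / 3

/-- `T_n`: words of length `n` over `A` containing no consecutive pair `(0,3)`. -/
def Tset (n : ℕ) : Set (List ℕ) :=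
  {l | l.length = n ∧ (∀ x ∈ l, x ∈ A) ∧ ¬ [0, 3] <:+: l}

/-- The substitution map `Φ` on finite words over `{0,1,3}`, replacing each maximal
bad block `(0, 3, ..., 3)` by the corresponding good block `(1, ..., 1, 0)`. -/
def PhiL : List ℕ → List ℕ
  | [] => []
  | [a] => [a]
  | 0 :: 3 :: t => 1 :: PhiL (0 :: t)
  | a :: b :: t => a :: PhiL (b :: t)
termination_by l => l.length


lemma mem_A_iff {x : ℕ} : x ∈ A ↔ x = 0 ∨ x = 1 ∨ x = 3 := by simp [A]

lemma proj_nonneg (l : List ℕ) : 0 ≤ proj l := by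
  induction l with
  | nil => simp [proj]
  | cons a t ih => simp only [proj]; positivity

lemma proj_lt {l : List ℕ} (h : ∀ x ∈ l, x ∈ A) : proj l < 9/2 := by
  induction l with
  | nil => norm_num [proj]
  | cons a t ih =>
    have ha : a = 0 ∨ a = 1 ∨ a = 3 := mem_A_iff.mp (h a (by simp))
    have ht := ih (fun x hx => h x (by simp [hx]))
    have h3 : (a : ℝ) ≤ 3 := by rcases ha with rfl|rfl|rfl <;> norm_num
    simp only [proj]; linarith

lemma proj_ge_three_head {l : List ℕ} (h : ∀ x ∈ l, x ∈ A) (h3 : 3 ≤ proj l) :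
    ∃ t, l = 3 :: t := by
  match l with
  | [] => simp [proj] at h3; linarith
  | a :: t =>
    have ht : proj t < 9/2 := proj_lt (fun x hx => h x (by simp [hx]))
    have ht0 := proj_nonneg t
    have ha : a = 0 ∨ a = 1 ∨ a = 3 := mem_A_iff.mp (h a (by simp))
    simp only [proj] at h3
    rcases ha with rfl|rfl|rfl
    · push_cast at h3; linarith
    · push_cast at h3; linarith
    · exact ⟨t, rfl⟩

lemma not_infix_tail {a : ℕ} {t : List ℕ} (h : ¬ [0,3] <:+: (a :: t)) :
    ¬ [0,3] <:+: t := fun h' => h (List.infix_cons_iff.mpr (Or.inr h'))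

lemma infix_03 {t : List ℕ} : [0,3] <:+: (0 :: 3 :: t) :=
  List.infix_cons_iff.mpr (Or.inl (by simp [List.cons_prefix_cons]))

lemma proj_inj : ∀ l m : List ℕ, l.length = m.length →
    (∀ x ∈ l, x ∈ A) → (∀ x ∈ m, x ∈ A) →
    ¬ [0,3] <:+: l → ¬ [0,3] <:+: m → proj l = proj m → l = m := by
  intro l
  induction l with
  | nil => intro m hlen _ _ _ _ _; exact (List.eq_nil_of_length_eq_zero hlen.symm).symm
  | cons a t ih =>
    intro m hlen hl hm hfl hfm hp
    match m with
    | [] => simp at hlen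
    | b :: s =>
      have ha : a = 0 ∨ a = 1 ∨ a = 3 := mem_A_iff.mp (hl a (by simp))
      have hb : b = 0 ∨ b = 1 ∨ b = 3 := mem_A_iff.mp (hm b (by simp))
      have ht : proj t < 9/2 := proj_lt (fun x hx => hl x (by simp [hx]))
      have hs : proj s < 9/2 := proj_lt (fun x hx => hm x (by simp [hx]))
      have ht0 := proj_nonneg t
      have hs0 := proj_nonneg s
      simp only [proj] at hp
      have hab : a = b := by
        rcases ha with rfl|rfl|rfl <;> rcases hb with rfl|rfl|rfl <;> push_cast at hp
        · rfl
        · exfalso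
          obtain ⟨t', ht'⟩ := proj_ge_three_head (l := t)
            (fun x hx => hl x (by simp [hx])) (by linarith)
          subst ht'
          exact hfl infix_03
        · exfalso; linarith
        · exfalso
          obtain ⟨s', hs'⟩ := proj_ge_three_head (l := s)
            (fun x hx => hm x (by simp [hx])) (by linarith)
          subst hs'
          exact hfm infix_03
        · rfl
        · exfalso; linarith
        · exfalso; linarith
        · exfalso; linarith
        · rfl
      subst hab
      have hts : proj t = proj s := by linarith
      have htail := ih s (by simpa using hlen)
        (fun x hx => hl x (by simp [hx])) (fun x hx => hm x (by simp [hx]))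
        (not_infix_tail hfl) (not_infix_tail hfm) hts
      rw [htail]

lemma PhiL_length (l : List ℕ) : (PhiL l).length = l.length := by
  induction l using PhiL.induct with
  | case1 => simp [PhiL]
  | case2 a => simp [PhiL]
  | case3 t ih => simp only [PhiL] at ih ⊢; simp at ih ⊢; omega
  | case4 a b t hne ih => rw [PhiL.eq_4 a b t hne]; simp at ih ⊢; omega

lemma PhiL_proj (l : List ℕ) : proj (PhiL l) = proj l := by
  induction l using PhiL.induct with
  | case1 => simp [PhiL]
  | case2 a => simp [PhiL]
  | case3 t ih =>
    have : PhiL (0 :: 3 :: t) = 1 :: PhiL (0 :: t) := by simp [PhiL]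
    rw [this]
    simp only [proj] at ih ⊢
    push_cast
    linarith
  | case4 a b t hne ih =>
    rw [PhiL.eq_4 a b t hne]
    simp only [proj] at ih ⊢
    linarith

lemma PhiL_mem {l : List ℕ} (h : ∀ x ∈ l, x ∈ A) : ∀ x ∈ PhiL l, x ∈ A := by
  induction l using PhiL.induct with
  | case1 => simp [PhiL]
  | case2 a => simpa [PhiL] using h
  | case3 t ih =>
    have heq : PhiL (0 :: 3 :: t) = 1 :: PhiL (0 :: t) := by simp [PhiL]
    rw [heq]
    intro x hx
    rcases List.mem_cons.mp hx with rfl | hx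
    · exact mem_A_iff.mpr (Or.inr (Or.inl rfl))
    · exact ih (fun y hy => by
        rcases List.mem_cons.mp hy with rfl | hy
        · exact mem_A_iff.mpr (Or.inl rfl)
        · exact h y (by simp [hy])) x hx
  | case4 a b t hne ih =>
    rw [PhiL.eq_4 a b t hne]
    intro x hx
    rcases List.mem_cons.mp hx with rfl | hx
    · exact h x (by simp)
    · exact ih (fun y hy => h y (by simp at hy ⊢; tauto)) x hx

lemma PhiL_head3 : ∀ (b : ℕ) (t : List ℕ), (PhiL (b :: t)).head? = some 3 → b = 3 := by
  intro b t
  match b, t with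
  | b, [] => simp [PhiL]
  | 0, 3 :: t => simp [PhiL]
  | 0, 0 :: t => simp [PhiL]
  | 0, 1 :: t => simp [PhiL]
  | 0, 2 :: t => simp [PhiL]
  | 0, (n+4) :: t => simp [PhiL]
  | 1, c :: t => simp [PhiL]
  | 3, c :: t => simp [PhiL]
  | 2, c :: t => simp [PhiL]
  | (n+4), c :: t => simp [PhiL]

lemma PhiL_avoids {l : List ℕ} (h : ∀ x ∈ l, x ∈ A) : ¬ [0,3] <:+: PhiL l := by
  induction l using PhiL.induct with
  | case1 => simp [PhiL]
  | case2 a => simp [PhiL]; intro hp; have := hp.length_le; simp at this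
  | case3 t ih =>
    have hmem : ∀ x ∈ (0 :: t), x ∈ A := by
      intro y hy
      rcases List.mem_cons.mp hy with rfl | hy
      · exact mem_A_iff.mpr (Or.inl rfl)
      · exact h y (by simp [hy])
    have heq : PhiL (0 :: 3 :: t) = 1 :: PhiL (0 :: t) := by simp [PhiL]
    rw [heq]
    intro hinf
    rcases List.infix_cons_iff.mp hinf with hp | hinf'
    · simp [List.cons_prefix_cons] at hp
    · exact ih hmem hinf'
  | case4 a b t hne ih =>
    have hmem : ∀ x ∈ (b :: t), x ∈ A := fun y hy => h y (by simp at hy ⊢; tauto)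
    rw [PhiL.eq_4 a b t hne]
    intro hinf
    rcases List.infix_cons_iff.mp hinf with hp | hinf'
    · rcases List.cons_prefix_cons.mp hp with ⟨rfl, hp'⟩
      match hPhi : PhiL (b :: t) with
      | [] => rw [hPhi] at hp'; simp at hp'
      | c :: r =>
        rw [hPhi] at hp'
        rcases List.cons_prefix_cons.mp hp' with ⟨rfl, _⟩
        have hb3 : b = 3 := PhiL_head3 b t (by rw [hPhi]; rfl)
        exact hne rfl hb3
    · exact ih hmem hinf'

/-- For `i ∈ T_n`, the fiber `I_i = {η ∈ A^n : Π(η) = Π(i)}` coincides with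
`{η ∈ A^n : Φ(η) = i}`. -/
theorem stmt_9 (n : ℕ) (i : List ℕ) (hi : i ∈ Tset n) :
    {η : List ℕ | η.length = n ∧ (∀ x ∈ η, x ∈ A) ∧ proj η = proj i} =
      {η : List ℕ | η.length = n ∧ (∀ x ∈ η, x ∈ A) ∧ PhiL η = i} := by
  obtain ⟨hilen, himem, hifree⟩ := hi
  ext η
  simp only [Set.mem_setOf_eq]
  constructor
  · rintro ⟨hlen, hmem, hproj⟩
    refine ⟨hlen, hmem, ?_⟩
    exact proj_inj (PhiL η) i (by rw [PhiL_length, hlen, hilen])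
      (PhiL_mem hmem) himem (PhiL_avoids hmem) hifree
      (by rw [PhiL_proj]; exact hproj)
  · rintro ⟨hlen, hmem, hphi⟩
    exact ⟨hlen, hmem, by rw [← hphi, PhiL_proj]⟩
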